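/- arXiv:2311.08061 — 2 statements merged into one kernel-verified Lean document; each statement's English description precedes it below -/
import Mathlib

section
/- For the FGM copula C_θ(u,v) = uv[1 + θ(1−u)(1−v)] with |θ| ≤ 1, the cumulative copula extropy equals (1/4)(1/9 + θ/72 + θ²/900). -/
lemma fgm_inner (a : ℝ) :
    (∫ v in (0:ℝ)..1, (v * (1 + a * (1 - v))) ^ 2) =
      (1+a)^2/3 - a*(1+a)/2 + a^2/5 := by
  have h : ∀ v : ℝ, (v * (1 + a * (1 - v))) ^ 2 =
      (1+a)^2 * v^2 - 2*a*(1+a) * v^3 + a^2 * v^4 := by intro v; ring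
  simp_rw [h]
  rw [intervalIntegral.integral_add, intervalIntegral.integral_sub] <;>
    try (apply Continuous.intervalIntegrable; fun_prop)
  simp [intervalIntegral.integral_const_mul, integral_pow]
  ring

/-- For the FGM copula `C_θ(u,v) = uv[1 + θ(1−u)(1−v)]` with `|θ| ≤ 1`,
the cumulative copula extropy equals `(1/4)(1/9 + θ/72 + θ²/900)`. -/
theorem ccex_fgm_copula (θ : ℝ) (hθ : |θ| ≤ 1) :
    (1/4 : ℝ) * (∫ u in (0:ℝ)..1, ∫ v in (0:ℝ)..1,
        (u * v * (1 + θ * (1 - u) * (1 - v))) ^ 2) =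
      (1/4) * (1/9 + θ/72 + θ^2/900) := by
  have hinner : ∀ u : ℝ, (∫ v in (0:ℝ)..1,
      (u * v * (1 + θ * (1 - u) * (1 - v))) ^ 2) =
      u^2 * ((1+θ*(1-u))^2/3 - θ*(1-u)*(1+θ*(1-u))/2 + (θ*(1-u))^2/5) := by
    intro u
    have h : ∀ v : ℝ, (u * v * (1 + θ * (1 - u) * (1 - v))) ^ 2 =
        u^2 * (v * (1 + (θ*(1-u)) * (1 - v))) ^ 2 := by intro v; ring
    simp_rw [h, intervalIntegral.integral_const_mul, fgm_inner]
  simp_rw [hinner]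
  have h2 : ∀ u : ℝ, u^2 * ((1+θ*(1-u))^2/3 - θ*(1-u)*(1+θ*(1-u))/2 + (θ*(1-u))^2/5) =
      (1/3 + θ/6 + θ^2/30) * u^2 + (-θ/6 - θ^2/15) * u^3 + (θ^2/30) * u^4 := by
    intro u; ring
  simp_rw [h2]
  rw [intervalIntegral.integral_add, intervalIntegral.integral_add] <;>
    try (apply Continuous.intervalIntegrable; fun_prop)
  simp [intervalIntegral.integral_const_mul, integral_pow]
  ring
end

section
/- For copulas C₁, C₂ in a totally (pointwise) ordered family, J_{C₁} ≥ J_{C₂} holds if and only if C₁(u,v) ≥ C₂(u,v) for all u,v (C₁ is more PQD than C₂). -/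
open Set MeasureTheory intervalIntegral

/-- A bivariate copula on `[0,1]²`. -/
def IsCopula (C : ℝ → ℝ → ℝ) : Prop :=
  (∀ r ∈ Set.Icc (0:ℝ) 1, C 0 r = 0 ∧ C r 0 = 0 ∧ C 1 r = r ∧ C r 1 = r) ∧
  (∀ u₁ u₂ v₁ v₂ : ℝ, u₁ ∈ Set.Icc (0:ℝ) 1 → u₂ ∈ Set.Icc (0:ℝ) 1 →
    v₁ ∈ Set.Icc (0:ℝ) 1 → v₂ ∈ Set.Icc (0:ℝ) 1 → u₁ ≤ u₂ → v₁ ≤ v₂ →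
    0 ≤ C u₂ v₂ - C u₂ v₁ - C u₁ v₂ + C u₁ v₁)

namespace CopulaAux

lemma mem01 : (0:ℝ) ∈ Set.Icc (0:ℝ) 1 := by norm_num

lemma copula_nonneg {C : ℝ → ℝ → ℝ} (hC : IsCopula C) :
    ∀ u ∈ Set.Icc (0:ℝ) 1, ∀ v ∈ Set.Icc (0:ℝ) 1, 0 ≤ C u v := by
  intro u hu v hv
  have h := hC.2 0 u 0 v mem01 hu mem01 hv hu.1 hv.1
  have h1 := (hC.1 v hv).1
  have h2 := (hC.1 u hu).2.1
  have h3 := (hC.1 0 mem01).1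
  linarith

lemma copula_mono_left {C : ℝ → ℝ → ℝ} (hC : IsCopula C) {v : ℝ} (hv : v ∈ Set.Icc (0:ℝ) 1)
    {u₁ u₂ : ℝ} (hu₁ : u₁ ∈ Set.Icc (0:ℝ) 1) (hu₂ : u₂ ∈ Set.Icc (0:ℝ) 1) (h : u₁ ≤ u₂) :
    C u₁ v ≤ C u₂ v := by
  have hr := hC.2 u₁ u₂ 0 v hu₁ hu₂ mem01 hv h hv.1
  have h1 := (hC.1 u₁ hu₁).2.1
  have h2 := (hC.1 u₂ hu₂).2.1
  linarith

/-- Continuity of the slice `v ↦ C u v ^ 2` on `[0,1]`. -/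
lemma slice_cont {C : ℝ → ℝ → ℝ}
    (hcont : ContinuousOn (fun p : ℝ × ℝ => C p.1 p.2) (Set.Icc (0:ℝ) 1 ×ˢ Set.Icc (0:ℝ) 1))
    {u : ℝ} (hu : u ∈ Set.Icc (0:ℝ) 1) :
    ContinuousOn (fun v => C u v ^ 2) (Set.Icc (0:ℝ) 1) := by
  have : ContinuousOn (fun v => C u v) (Set.Icc (0:ℝ) 1) := by
    have hmap : Set.MapsTo (fun v : ℝ => (u, v)) (Set.Icc (0:ℝ) 1)
        (Set.Icc (0:ℝ) 1 ×ˢ Set.Icc (0:ℝ) 1) := fun v hv => ⟨hu, hv⟩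
    exact hcont.comp (Continuous.continuousOn (by continuity)) hmap
  exact this.pow 2

lemma slice_integrable {C : ℝ → ℝ → ℝ}
    (hcont : ContinuousOn (fun p : ℝ × ℝ => C p.1 p.2) (Set.Icc (0:ℝ) 1 ×ˢ Set.Icc (0:ℝ) 1))
    {u : ℝ} (hu : u ∈ Set.Icc (0:ℝ) 1) {a b : ℝ} (ha : a ∈ Set.Icc (0:ℝ) 1)
    (hb : b ∈ Set.Icc (0:ℝ) 1) :
    IntervalIntegrable (fun v => C u v ^ 2) volume a b := by
  apply ContinuousOn.intervalIntegrable
  exact (slice_cont hcont hu).mono (Set.uIcc_subset_Icc ha hb)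

/-- The inner integral is monotone in `u`. -/
lemma inner_monotoneOn {C : ℝ → ℝ → ℝ} (hC : IsCopula C)
    (hcont : ContinuousOn (fun p : ℝ × ℝ => C p.1 p.2) (Set.Icc (0:ℝ) 1 ×ˢ Set.Icc (0:ℝ) 1)) :
    MonotoneOn (fun u => ∫ v in (0:ℝ)..1, C u v ^ 2) (Set.Icc (0:ℝ) 1) := by
  intro u₁ hu₁ u₂ hu₂ h
  apply intervalIntegral.integral_mono_on (by norm_num)
    (slice_integrable hcont hu₁ mem01 (by norm_num))
    (slice_integrable hcont hu₂ mem01 (by norm_num))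
  intro v hv
  have h0 := copula_nonneg hC u₁ hu₁ v hv
  have hm := copula_mono_left hC hv hu₁ hu₂ h
  exact pow_le_pow_left₀ h0 hm 2

lemma outer_integrable {C : ℝ → ℝ → ℝ} (hC : IsCopula C)
    (hcont : ContinuousOn (fun p : ℝ × ℝ => C p.1 p.2) (Set.Icc (0:ℝ) 1 ×ˢ Set.Icc (0:ℝ) 1)) :
    IntervalIntegrable (fun u => ∫ v in (0:ℝ)..1, C u v ^ 2) volume 0 1 := by
  apply MonotoneOn.intervalIntegrable
  rw [Set.uIcc_of_le (by norm_num : (0:ℝ) ≤ 1)]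
  exact inner_monotoneOn hC hcont

/-- Pointwise `C₂ ≤ C₁` implies the integral inequality. -/
lemma integral_le_of_le {C₁ C₂ : ℝ → ℝ → ℝ} (hC₁ : IsCopula C₁) (hC₂ : IsCopula C₂)
    (hcont₁ : ContinuousOn (fun p : ℝ × ℝ => C₁ p.1 p.2) (Set.Icc (0:ℝ) 1 ×ˢ Set.Icc (0:ℝ) 1))
    (hcont₂ : ContinuousOn (fun p : ℝ × ℝ => C₂ p.1 p.2) (Set.Icc (0:ℝ) 1 ×ˢ Set.Icc (0:ℝ) 1))
    (h : ∀ u ∈ Set.Icc (0:ℝ) 1, ∀ v ∈ Set.Icc (0:ℝ) 1, C₂ u v ≤ C₁ u v) :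
    (∫ u in (0:ℝ)..1, ∫ v in (0:ℝ)..1, (C₂ u v) ^ 2) ≤
      (∫ u in (0:ℝ)..1, ∫ v in (0:ℝ)..1, (C₁ u v) ^ 2) := by
  apply intervalIntegral.integral_mono_on (by norm_num)
    (outer_integrable hC₂ hcont₂) (outer_integrable hC₁ hcont₁)
  intro u hu
  apply intervalIntegral.integral_mono_on (by norm_num)
    (slice_integrable hcont₂ hu mem01 (by norm_num))
    (slice_integrable hcont₁ hu mem01 (by norm_num))
  intro v hv
  exact pow_le_pow_left₀ (copula_nonneg hC₂ u hu v hv) (h u hu v hv) 2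

end CopulaAux

open CopulaAux

/-- For copulas in a totally (pointwise) ordered family (continuous members),
`J_{C₁} ≥ J_{C₂}` if and only if `C₁ ≥ C₂` pointwise (`C₁` is more PQD than `C₂`). -/
theorem ccex_ge_iff_more_pqd (C₁ C₂ : ℝ → ℝ → ℝ)
    (hC₁ : IsCopula C₁) (hC₂ : IsCopula C₂)
    (hcont₁ : ContinuousOn (fun p : ℝ × ℝ => C₁ p.1 p.2)
      (Set.Icc (0:ℝ) 1 ×ˢ Set.Icc (0:ℝ) 1))
    (hcont₂ : ContinuousOn (fun p : ℝ × ℝ => C₂ p.1 p.2)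
      (Set.Icc (0:ℝ) 1 ×ˢ Set.Icc (0:ℝ) 1))
    (htot : (∀ u ∈ Set.Icc (0:ℝ) 1, ∀ v ∈ Set.Icc (0:ℝ) 1, C₁ u v ≤ C₂ u v) ∨
            (∀ u ∈ Set.Icc (0:ℝ) 1, ∀ v ∈ Set.Icc (0:ℝ) 1, C₂ u v ≤ C₁ u v)) :
    ((1/4 : ℝ) * (∫ u in (0:ℝ)..1, ∫ v in (0:ℝ)..1, (C₂ u v) ^ 2) ≤
      (1/4) * (∫ u in (0:ℝ)..1, ∫ v in (0:ℝ)..1, (C₁ u v) ^ 2)) ↔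
    (∀ u ∈ Set.Icc (0:ℝ) 1, ∀ v ∈ Set.Icc (0:ℝ) 1, C₂ u v ≤ C₁ u v) := by
  constructor
  · intro hJ
    rcases htot with h12 | h21
    · -- C₁ ≤ C₂ pointwise; combined with hJ, the integrals are equal.
      have hle : (∫ u in (0:ℝ)..1, ∫ v in (0:ℝ)..1, (C₁ u v) ^ 2) ≤
          (∫ u in (0:ℝ)..1, ∫ v in (0:ℝ)..1, (C₂ u v) ^ 2) :=
        integral_le_of_le hC₂ hC₁ hcont₂ hcont₁ h12
      have hJ' : (∫ u in (0:ℝ)..1, ∫ v in (0:ℝ)..1, (C₂ u v) ^ 2) ≤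
          (∫ u in (0:ℝ)..1, ∫ v in (0:ℝ)..1, (C₁ u v) ^ 2) := by linarith
      have heq : (∫ u in (0:ℝ)..1, ∫ v in (0:ℝ)..1, (C₂ u v) ^ 2) =
          (∫ u in (0:ℝ)..1, ∫ v in (0:ℝ)..1, (C₁ u v) ^ 2) := le_antisymm hJ' hle
      -- Show in fact C₂ = C₁ on the square (so C₂ ≤ C₁).
      intro u₀ hu₀ v₀ hv₀
      by_contra hlt'
      push_neg at hlt'
      -- hlt' : C₁ u₀ v₀ < C₂ u₀ v₀
      set f : ℝ × ℝ → ℝ := fun p => C₂ p.1 p.2 ^ 2 - C₁ p.1 p.2 ^ 2 with hf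
      have hfnn : ∀ p ∈ Set.Icc (0:ℝ) 1 ×ˢ Set.Icc (0:ℝ) 1, 0 ≤ f p := by
        rintro ⟨u, v⟩ ⟨hu, hv⟩
        have := pow_le_pow_left₀ (copula_nonneg hC₁ u hu v hv) (h12 u hu v hv) 2
        simp only [hf]; linarith
      obtain ⟨ε, hεdef⟩ : ∃ ε : ℝ, ε = f (u₀, v₀) := ⟨_, rfl⟩
      have hεpos : 0 < ε := by
        have h0 : 0 ≤ C₁ u₀ v₀ := copula_nonneg hC₁ u₀ hu₀ v₀ hv₀
        have := pow_lt_pow_left₀ hlt' h0 (by norm_num : 2 ≠ 0)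
        rw [hεdef]; simp only [hf]; linarith
      -- continuity of f on the square
      have hfc : ContinuousOn f (Set.Icc (0:ℝ) 1 ×ˢ Set.Icc (0:ℝ) 1) :=
        (hcont₂.pow 2).sub (hcont₁.pow 2)
      have hmem : (u₀, v₀) ∈ Set.Icc (0:ℝ) 1 ×ˢ Set.Icc (0:ℝ) 1 := ⟨hu₀, hv₀⟩
      have hcw : ContinuousWithinAt f (Set.Icc (0:ℝ) 1 ×ˢ Set.Icc (0:ℝ) 1) (u₀, v₀) :=
        hfc _ hmem
      rw [Metric.continuousWithinAt_iff] at hcw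
      obtain ⟨δ, hδpos, hδ⟩ := hcw (ε/2) (by linarith)
      set a : ℝ := max 0 (u₀ - δ/2) with ha
      set b : ℝ := min 1 (u₀ + δ/2) with hb
      set c : ℝ := max 0 (v₀ - δ/2) with hc
      set d : ℝ := min 1 (v₀ + δ/2) with hd
      have hab : a < b := by
        refine max_lt (lt_min ?_ ?_) (lt_min ?_ ?_) <;>
          [skip; skip; skip; skip] <;>
          first
          | linarith [hu₀.1, hu₀.2]
      have hcd : c < d := by
        refine max_lt (lt_min ?_ ?_) (lt_min ?_ ?_) <;> linarith [hv₀.1, hv₀.2]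
      have ha0 : (0:ℝ) ≤ a := le_max_left _ _
      have hb1 : b ≤ 1 := min_le_left _ _
      have hc0 : (0:ℝ) ≤ c := le_max_left _ _
      have hd1 : d ≤ 1 := min_le_left _ _
      -- on [a,b] × [c,d], f > ε/2
      have hbig : ∀ u ∈ Set.Icc a b, ∀ v ∈ Set.Icc c d, ε/2 < f (u, v) := by
        intro u hu v hv
        have huI : u ∈ Set.Icc (0:ℝ) 1 := ⟨le_trans ha0 hu.1, le_trans hu.2 hb1⟩
        have hvI : v ∈ Set.Icc (0:ℝ) 1 := ⟨le_trans hc0 hv.1, le_trans hv.2 hd1⟩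
        have hdu : |u - u₀| ≤ δ/2 := by
          rw [abs_le]
          constructor
          · have := le_trans (le_max_right 0 (u₀ - δ/2)) hu.1; linarith
          · have := le_trans hu.2 (min_le_right 1 (u₀ + δ/2)); linarith
        have hdv : |v - v₀| ≤ δ/2 := by
          rw [abs_le]
          constructor
          · have := le_trans (le_max_right 0 (v₀ - δ/2)) hv.1; linarith
          · have := le_trans hv.2 (min_le_right 1 (v₀ + δ/2)); linarith
        have hdist : dist (u, v) ((u₀, v₀) : ℝ × ℝ) < δ := by
          rw [Prod.dist_eq]
          apply max_lt <;> rw [Real.dist_eq] <;> [exact lt_of_le_of_lt hdu (by linarith);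
            exact lt_of_le_of_lt hdv (by linarith)]
        have := hδ ⟨huI, hvI⟩ hdist
        rw [Real.dist_eq, abs_lt, ← hεdef] at this
        linarith [this.1]
      -- inner integral bound on [a,b]
      have hinner : ∀ u ∈ Set.Icc a b,
          (d - c) * (ε/2) ≤ (∫ v in (0:ℝ)..1, C₂ u v ^ 2) - (∫ v in (0:ℝ)..1, C₁ u v ^ 2) := by
        intro u hu
        have huI : u ∈ Set.Icc (0:ℝ) 1 := ⟨le_trans ha0 hu.1, le_trans hu.2 hb1⟩
        have hi₁ := slice_integrable hcont₁ huI mem01 (by norm_num : (1:ℝ) ∈ Set.Icc (0:ℝ) 1)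
        have hi₂ := slice_integrable hcont₂ huI mem01 (by norm_num : (1:ℝ) ∈ Set.Icc (0:ℝ) 1)
        have hsub : (∫ v in (0:ℝ)..1, C₂ u v ^ 2) - (∫ v in (0:ℝ)..1, C₁ u v ^ 2) =
            ∫ v in (0:ℝ)..1, (C₂ u v ^ 2 - C₁ u v ^ 2) :=
          (intervalIntegral.integral_sub hi₂ hi₁).symm
        rw [hsub]
        have hfi : IntervalIntegrable (fun v => C₂ u v ^ 2 - C₁ u v ^ 2) volume 0 1 :=
          hi₂.sub hi₁
        have h1 : (∫ v in c..d, (C₂ u v ^ 2 - C₁ u v ^ 2)) ≤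
            ∫ v in (0:ℝ)..1, (C₂ u v ^ 2 - C₁ u v ^ 2) := by
          apply intervalIntegral.integral_mono_interval hc0 (le_of_lt hcd) hd1 _ hfi
          filter_upwards [MeasureTheory.ae_restrict_mem measurableSet_Ioc] with v hv
          have hvI : v ∈ Set.Icc (0:ℝ) 1 := ⟨le_of_lt hv.1, hv.2⟩
          exact hfnn (u, v) ⟨huI, hvI⟩
        have h2 : (d - c) * (ε/2) ≤ ∫ v in c..d, (C₂ u v ^ 2 - C₁ u v ^ 2) := by
          have := intervalIntegral.integral_mono_on (le_of_lt hcd)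
            (intervalIntegrable_const : IntervalIntegrable (fun _ => ε/2) volume c d)
            (hfi.mono_set (Set.uIcc_subset_uIcc
              (by rw [Set.uIcc_of_le (by norm_num : (0:ℝ) ≤ 1)]; exact ⟨hc0, le_trans (le_of_lt hcd) hd1⟩)
              (by rw [Set.uIcc_of_le (by norm_num : (0:ℝ) ≤ 1)]; exact ⟨le_trans hc0 (le_of_lt hcd), hd1⟩)))
            (fun v hv => le_of_lt (hbig u hu v hv))
          rw [intervalIntegral.integral_const, smul_eq_mul] at this
          linarith
        linarith
      -- outer bound
      set g : ℝ → ℝ := fun u => (∫ v in (0:ℝ)..1, C₂ u v ^ 2) - (∫ v in (0:ℝ)..1, C₁ u v ^ 2)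
        with hg
      have hgi : IntervalIntegrable g volume 0 1 :=
        (outer_integrable hC₂ hcont₂).sub (outer_integrable hC₁ hcont₁)
      have hgnn : ∀ u ∈ Set.Icc (0:ℝ) 1, 0 ≤ g u := by
        intro u hu
        have := intervalIntegral.integral_mono_on (by norm_num : (0:ℝ) ≤ 1)
          (slice_integrable hcont₁ hu mem01 (by norm_num))
          (slice_integrable hcont₂ hu mem01 (by norm_num))
          (fun v hv => pow_le_pow_left₀ (copula_nonneg hC₁ u hu v hv) (h12 u hu v hv) 2)
        simp only [hg]; linarith
      have houter1 : (∫ u in a..b, g u) ≤ ∫ u in (0:ℝ)..1, g u := by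
        apply intervalIntegral.integral_mono_interval ha0 (le_of_lt hab) hb1 _ hgi
        filter_upwards [MeasureTheory.ae_restrict_mem measurableSet_Ioc] with u hu
        exact hgnn u ⟨le_of_lt hu.1, hu.2⟩
      have houter2 : (b - a) * ((d - c) * (ε/2)) ≤ ∫ u in a..b, g u := by
        have := intervalIntegral.integral_mono_on (le_of_lt hab)
          (intervalIntegrable_const : IntervalIntegrable (fun _ => (d - c) * (ε/2)) volume a b)
          (hgi.mono_set (Set.uIcc_subset_uIcc
            (by rw [Set.uIcc_of_le (by norm_num : (0:ℝ) ≤ 1)]; exact ⟨ha0, le_trans (le_of_lt hab) hb1⟩)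
            (by rw [Set.uIcc_of_le (by norm_num : (0:ℝ) ≤ 1)]; exact ⟨le_trans ha0 (le_of_lt hab), hb1⟩)))
          hinner
        rw [intervalIntegral.integral_const, smul_eq_mul] at this
        linarith
      have hgzero : (∫ u in (0:ℝ)..1, g u) = 0 := by
        have := intervalIntegral.integral_sub (outer_integrable hC₂ hcont₂)
          (outer_integrable hC₁ hcont₁)
        simp only [hg]
        rw [this, heq, sub_self]
      have hpos : 0 < (b - a) * ((d - c) * (ε/2)) := by
        apply mul_pos (by linarith) (mul_pos (by linarith) (by linarith))
      linarith
    · exact h21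
  · intro h
    have := integral_le_of_le hC₁ hC₂ hcont₁ hcont₂ h
    linarith
end
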